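/- Let z ∈ ℝ^d and let S be any set of s coordinates that contains the g coordinates of largest magnitude of z, where 1 ≤ g ≤ s ≤ d. Then ‖z_S‖₂² ≥ (1/⌈s/g⌉) · ‖z_{S'}‖₂² for every subset S' ⊆ [d] with |S'| ≤ s. Equivalently, such an S is a (δ, z)-DMO with δ = √(1/⌈s/g⌉). -/

import Mathlib

/-!
Let `m` be the smallest squared entry of `z` on the top-`g` set `I`. Every entry of `S'` outside
`I` is at most `m` and every entry of `I` outside `S'` is at least `m`, so trading them gives
`‖z_{S'}‖² ≤ ‖z_I‖² + (s - g)·m`; since `g·m ≤ ‖z_I‖²` this is at most `(s/g)·‖z_I‖²`, and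
`s/g ≤ ⌈s/g⌉` and `I ⊆ S` finish the proof.
-/

open scoped InnerProductSpace

noncomputable def restrict {d : ℕ} (z : EuclideanSpace ℝ (Fin d)) (S : Finset (Fin d)) :
    EuclideanSpace ℝ (Fin d) :=
  WithLp.toLp 2 fun i => if i ∈ S then z i else 0

lemma norm_restrict_sq {d : ℕ} (z : EuclideanSpace ℝ (Fin d)) (S : Finset (Fin d)) :
    ‖restrict z S‖ ^ 2 = ∑ i ∈ S, z i ^ 2 := by
  rw [EuclideanSpace.norm_sq_eq,
    ← Finset.sum_subset (Finset.subset_univ S) fun i _ hi => by simp [restrict, hi]]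
  exact Finset.sum_congr rfl fun i hi => by simp [restrict, hi]

open Finset

section Threshold

variable {ι R : Type*} [DecidableEq ι] [CommRing R] [PartialOrder R] [IsOrderedRing R]
  {f : ι → R} {T I : Finset ι} {m : R}

lemma Finset.sum_le_sum_add_card_sub_card_mul (hI : ∀ i ∈ I, m ≤ f i)
    (hT : ∀ j ∈ T \ I, f j ≤ m) :
    ∑ j ∈ T, f j ≤ ∑ i ∈ I, f i + ((#T : R) - #I) * m := by
  have hcard : ((#(T \ I) : ℕ) : R) - #(I \ T) = (#T : R) - #I := by
    rw [← card_sdiff_add_card_inter T I, ← card_sdiff_add_card_inter I T, inter_comm]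
    push_cast
    ring
  have hout : ∑ j ∈ T \ I, f j ≤ #(T \ I) * m := by
    simpa only [nsmul_eq_mul] using sum_le_card_nsmul _ f m hT
  have hin : #(I \ T) * m ≤ ∑ i ∈ I \ T, f i := by
    simpa only [nsmul_eq_mul] using
      card_nsmul_le_sum _ f m fun i hi => hI i (mem_sdiff.mp hi).1
  have htrade := sum_sdiff_sub_sum_sdiff (s₁ := I) (s₂ := T) (f := f)
  linear_combination -htrade + hout + hin + m * hcard

lemma Finset.card_mul_sum_le_mul_sum_of_threshold {s : ℕ} (hTs : #T ≤ s) (hIs : #I ≤ s)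
    (hm : 0 ≤ m) (hI : ∀ i ∈ I, m ≤ f i) (hT : ∀ j ∈ T \ I, f j ≤ m) :
    #I * ∑ j ∈ T, f j ≤ s * ∑ i ∈ I, f i := by
  have htrade := sum_le_sum_add_card_sub_card_mul hI hT
  have hmass : #I * m ≤ ∑ i ∈ I, f i := by
    simpa only [nsmul_eq_mul] using card_nsmul_le_sum I f m hI
  have hTs' : (#T : R) ≤ s := Nat.mono_cast hTs
  have hIs' : (#I : R) ≤ s := Nat.mono_cast hIs
  calc (#I : R) * ∑ j ∈ T, f j ≤ #I * (∑ i ∈ I, f i + ((s : R) - #I) * m) := by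
        gcongr
        exact htrade.trans (by gcongr)
    _ = #I * ∑ i ∈ I, f i + ((s : R) - #I) * (#I * m) := by ring
    _ ≤ #I * ∑ i ∈ I, f i + ((s : R) - #I) * ∑ i ∈ I, f i := by gcongr
    _ = s * ∑ i ∈ I, f i := by ring

end Threshold

lemma exists_sq_threshold {d : ℕ} {z : EuclideanSpace ℝ (Fin d)} {I : Finset (Fin d)}
    (hI : I.Nonempty) (htop : ∀ i ∈ I, ∀ j ∉ I, |z j| ≤ |z i|) :
    ∃ m : ℝ, 0 ≤ m ∧ (∀ i ∈ I, m ≤ z i ^ 2) ∧ ∀ j ∉ I, z j ^ 2 ≤ m := by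
  obtain ⟨i₀, hi₀, hmin⟩ := I.exists_min_image (fun i => |z i|) hI
  exact ⟨z i₀ ^ 2, sq_nonneg _, fun i hi => sq_le_sq.2 (by simpa using hmin i hi),
    fun j hj => sq_le_sq.2 (by simpa using htop i₀ hi₀ j hj)⟩

theorem stmt3_general {d : ℕ} (z : EuclideanSpace ℝ (Fin d)) (g s : ℕ)
    (hg : 1 ≤ g) (hgs : g ≤ s)
    (S : Finset (Fin d))
    (I : Finset (Fin d)) (hIcard : I.card = g) (hIS : I ⊆ S)
    (htop : ∀ i ∈ I, ∀ j ∉ I, |z j| ≤ |z i|) :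
    ∀ S' : Finset (Fin d), S'.card ≤ s →
      (1 / (⌈(s : ℝ) / (g : ℝ)⌉ : ℝ)) * ‖restrict z S'‖ ^ 2 ≤ ‖restrict z S‖ ^ 2 := by
  intro S' hS'
  rw [norm_restrict_sq, norm_restrict_sq]
  obtain ⟨m, hm, hmI, hmout⟩ := exists_sq_threshold (card_pos.mp (by omega)) htop
  have hbound : (g : ℝ) * ∑ j ∈ S', z j ^ 2 ≤ s * ∑ i ∈ I, z i ^ 2 := by
    simpa only [hIcard] using card_mul_sum_le_mul_sum_of_threshold hS' (hIcard ▸ hgs) hm hmI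
      fun j hj => hmout j (mem_sdiff.mp hj).2
  have hg0 : (0 : ℝ) < g := by exact_mod_cast hg
  have hceil : (s : ℝ) / g ≤ ⌈(s : ℝ) / g⌉ := Int.le_ceil _
  have hceil0 : (0 : ℝ) < ⌈(s : ℝ) / g⌉ :=
    lt_of_lt_of_le (div_pos (by exact_mod_cast hg.trans hgs) hg0) hceil
  rw [one_div, inv_mul_le_iff₀ hceil0]
  calc ∑ j ∈ S', z j ^ 2 ≤ (s : ℝ) / g * ∑ i ∈ I, z i ^ 2 := by
        rw [div_mul_eq_mul_div, le_div_iff₀ hg0]; linarith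
    _ ≤ ⌈(s : ℝ) / g⌉ * ∑ i ∈ S, z i ^ 2 := by gcongr

/-- If `S` has `s` coordinates and contains a set `I` of `g` coordinates of largest magnitude
of `z`, then `‖z_S‖² ≥ (1/⌈s/g⌉)·‖z_{S'}‖²` for every `S'` with `|S'| ≤ s`; i.e. `S` is a
`(δ, z)`-DMO with `δ = √(1/⌈s/g⌉)`. -/
theorem stmt3 {d : ℕ} (z : EuclideanSpace ℝ (Fin d)) (g s : ℕ)
    (hg : 1 ≤ g) (hgs : g ≤ s) (hsd : s ≤ d)
    (S : Finset (Fin d)) (hScard : S.card = s)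
    (I : Finset (Fin d)) (hIcard : I.card = g) (hIS : I ⊆ S)
    (htop : ∀ i ∈ I, ∀ j ∉ I, |z j| ≤ |z i|) :
    ∀ S' : Finset (Fin d), S'.card ≤ s →
      (1 / (⌈(s : ℝ) / (g : ℝ)⌉ : ℝ)) * ‖restrict z S'‖ ^ 2 ≤ ‖restrict z S‖ ^ 2 :=
  stmt3_general z g s hg hgs S I hIcard hIS htop
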